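/- arXiv:1906.00187 — 2 statements merged into one kernel-verified Lean document; each statement's English description precedes it below -/
import Mathlib

section
/- For every pair of nonnegative integers m, n, the functions φ^s_m(z) = (π m!)^{−1/2} ((1 − s²)/(2s))^{(m+1)/2} e^{−α z²} z^m satisfy ∫_ℂ φ^s_m(z) · conj(φ^s_n(z)) · ω_s(z) dλ(z) = δ_{m,n}; i.e., (φ^s_m)_{m∈ℕ} is an orthonormal system in L²(ℂ, ω_s dλ). -/
open MeasureTheory Complex

/-- The weight `ω_s(z) = exp(α(z² + conj z²) - ν |z|²)` with `α = (1+s²)/(4s)`,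
`ν = (1-s²)/(2s)`; the exponent is real since `z² + conj z²` is real. -/
noncomputable def omegaS (s : ℝ) (z : ℂ) : ℝ :=
  Real.exp (((1 + s ^ 2) / (4 * s)) * (z ^ 2 + (starRingEnd ℂ z) ^ 2).re
    - ((1 - s ^ 2) / (2 * s)) * ‖z‖ ^ 2)

/-- `φ^s_m(z) = (π m!)^{-1/2} ((1-s²)/(2s))^{(m+1)/2} e^{-α z²} z^m` with `α = (1+s²)/(4s)`. -/
noncomputable def phiS (s : ℝ) (m : ℕ) (z : ℂ) : ℂ :=
  (1 / (Real.sqrt (Real.pi * m.factorial)) : ℂ)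
    * (Real.sqrt (((1 - s ^ 2) / (2 * s)) ^ (m + 1)) : ℂ)
    * Complex.exp (-(((1 + s ^ 2) / (4 * s) : ℝ) : ℂ) * z ^ 2) * z ^ m
/-!
The Gaussian factors `e^{-αz²}` of `φ^s_m` and `conj φ^s_n` cancel the non-radial part
`α(z² + conj z²)` of the exponent of `ω_s`, leaving `c_m c_n z^m (conj z)^n e^{-ν|z|²}`. In polar
coordinates `z = r e^{iθ}` the angular integral of `e^{i(m-n)θ}` vanishes unless `m = n`, and the
radial integral `∫ r^{2m+1} e^{-νr²} dr = m!/(2ν^{m+1})` is a Gamma integral, which the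
normalising constants `c_m² = ν^{m+1}/(π m!)` turn into `1`.
-/

open Set
open scoped Real

lemma integral_cexp_int_mul_mul_I_Ioo (k : ℤ) :
    ∫ θ in Ioo (-π) π, cexp (k * θ * I) = if k = 0 then (2 * π : ℂ) else 0 := by
  rw [← integral_Ioc_eq_integral_Ioo,
    ← intervalIntegral.integral_of_le (by linarith [Real.pi_pos] : -π ≤ π)]
  split_ifs with hk
  · simp [hk, two_mul]
  have hkI : (k : ℂ) * I ≠ 0 := mul_ne_zero (by exact_mod_cast hk) I_ne_zero
  simp_rw [mul_right_comm _ _ I]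
  rw [integral_exp_mul_complex hkI]
  have hpi : (k : ℂ) * I * π = k * (π * I) := by ring
  have hnegpi : (k : ℂ) * I * (-π : ℝ) = ((-k : ℤ) : ℂ) * (π * I) := by push_cast; ring
  rw [hpi, hnegpi, exp_int_mul, exp_int_mul, exp_pi_mul_I, zpow_neg, ← inv_zpow, inv_neg_one,
    sub_self, zero_div]

lemma integral_pow_two_mul_add_one_mul_exp_neg_mul_sq {b : ℝ} (hb : 0 < b) (j : ℕ) :
    ∫ x in Ioi (0 : ℝ), x ^ (2 * j + 1) * rexp (-b * x ^ 2) = j.factorial / (2 * b ^ (j + 1)) := by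
  have h := _root_.integral_rpow_mul_exp_neg_mul_rpow (p := 2) (q := (2 * j + 1 : ℕ))
    two_pos (neg_one_lt_zero.trans_le (Nat.cast_nonneg _)) hb
  simp only [Real.rpow_natCast, show (2 : ℝ) = ((2 : ℕ) : ℝ) by norm_num] at h
  rw [h, neg_div, show (((2 * j + 1 : ℕ) : ℝ) + 1) / ((2 : ℕ) : ℝ) = (j : ℝ) + 1 by
    push_cast; ring, Real.rpow_neg hb.le, Real.Gamma_nat_eq_factorial,
    show b ^ ((j : ℝ) + 1) = b ^ (j + 1) by norm_cast]
  field_simp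
  norm_num

lemma Complex.polarCoord_symm_eq_ofReal_mul_cexp (p : ℝ × ℝ) :
    Complex.polarCoord.symm p = p.1 * cexp (p.2 * I) := by
  rw [Complex.polarCoord_symm_apply, exp_mul_I, ← ofReal_cos, ← ofReal_sin]

lemma ofReal_mul_cexp_pow_mul_conj_pow (r θ : ℝ) (m n : ℕ) :
    ((r : ℂ) * cexp (θ * I)) ^ m * starRingEnd ℂ ((r : ℂ) * cexp (θ * I)) ^ n
      = (r ^ (m + n) : ℝ) * cexp (((m : ℤ) - n : ℤ) * θ * I) := by
  rw [map_mul, conj_ofReal, ← exp_conj, map_mul, conj_ofReal, conj_I, mul_pow, mul_pow,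
    ← Complex.exp_nat_mul, ← Complex.exp_nat_mul,
    show (((m : ℤ) - n : ℤ) : ℂ) * θ * I = m * (θ * I) + n * (θ * -I) by push_cast; ring, exp_add]
  push_cast
  ring

lemma integral_pow_mul_conj_pow_mul_cexp_neg_mul_norm_sq {b : ℝ} (hb : 0 < b) (m n : ℕ) :
    ∫ z : ℂ, z ^ m * starRingEnd ℂ z ^ n * cexp (-(b * ‖z‖ ^ 2 : ℝ))
      = if m = n then ((π * m.factorial / b ^ (m + 1) : ℝ) : ℂ) else 0 := by
  rw [← Complex.integral_comp_polarCoord_symm, polarCoord_target]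
  have hpolar : ∀ p : ℝ × ℝ,
      p.1 • ((Complex.polarCoord.symm p) ^ m * starRingEnd ℂ (Complex.polarCoord.symm p) ^ n
          * cexp (-(b * ‖Complex.polarCoord.symm p‖ ^ 2 : ℝ)))
        = ((p.1 ^ (m + n + 1) * rexp (-b * p.1 ^ 2) : ℝ) : ℂ)
          * cexp (((m : ℤ) - n : ℤ) * p.2 * I) := by
    rintro ⟨r, θ⟩
    rw [Complex.norm_polarCoord_symm, sq_abs, Complex.polarCoord_symm_eq_ofReal_mul_cexp,
      ofReal_mul_cexp_pow_mul_conj_pow, real_smul]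
    push_cast
    rw [neg_mul]
    ring
  simp_rw [hpolar]
  rw [Measure.volume_eq_prod,
    setIntegral_prod_mul (fun r : ℝ ↦ ((r ^ (m + n + 1) * rexp (-b * r ^ 2) : ℝ) : ℂ))
      (fun θ : ℝ ↦ cexp (((m : ℤ) - n : ℤ) * θ * I)), integral_complex_ofReal,
    integral_cexp_int_mul_mul_I_Ioo]
  by_cases hmn : m = n
  · subst hmn
    rw [if_pos rfl, if_pos (sub_self _), show m + m + 1 = 2 * m + 1 by ring,
      integral_pow_two_mul_add_one_mul_exp_neg_mul_sq hb]
    push_cast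
    field_simp
  · have hk : ((m : ℤ) - n : ℤ) ≠ 0 := sub_ne_zero.mpr (by exact_mod_cast hmn)
    rw [if_neg hk, if_neg hmn, mul_zero]

lemma cexp_neg_mul_sq_mul_conj_mul_omegaS (s : ℝ) (z : ℂ) :
    cexp (-(((1 + s ^ 2) / (4 * s) : ℝ) : ℂ) * z ^ 2)
        * starRingEnd ℂ (cexp (-(((1 + s ^ 2) / (4 * s) : ℝ) : ℂ) * z ^ 2)) * (omegaS s z : ℂ)
      = cexp (-((1 - s ^ 2) / (2 * s) * ‖z‖ ^ 2 : ℝ)) := by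
  have hre : (((z ^ 2 + starRingEnd ℂ z ^ 2).re : ℝ) : ℂ) = z ^ 2 + starRingEnd ℂ z ^ 2 := by
    refine conj_eq_iff_re.mp ?_
    rw [map_add, map_pow, map_pow, conj_conj, add_comm]
  rw [omegaS, ← exp_conj, ofReal_exp, ← Complex.exp_add, ← Complex.exp_add]
  congr 1
  rw [map_mul, map_neg, conj_ofReal, map_pow]
  push_cast
  rw [hre]
  ring

lemma phiS_mul_conj_phiS_mul_omegaS (s : ℝ) (m n : ℕ) (z : ℂ) :
    phiS s m z * starRingEnd ℂ (phiS s n z) * (omegaS s z : ℂ)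
      = ((1 / √(π * m.factorial) * √(((1 - s ^ 2) / (2 * s)) ^ (m + 1))
          * (1 / √(π * n.factorial) * √(((1 - s ^ 2) / (2 * s)) ^ (n + 1))) : ℝ) : ℂ)
        * (z ^ m * starRingEnd ℂ z ^ n * cexp (-((1 - s ^ 2) / (2 * s) * ‖z‖ ^ 2 : ℝ))) := by
  rw [← cexp_neg_mul_sq_mul_conj_mul_omegaS]
  simp only [phiS, map_mul, map_div₀, map_one, map_pow, conj_ofReal]
  push_cast
  ring

lemma one_div_sqrt_mul_sqrt_mul_self_mul_div {a c : ℝ} (ha : 0 < a) (hc : 0 < c) :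
    1 / √a * √c * (1 / √a * √c) * (a / c) = 1 := by
  rw [mul_mul_mul_comm, ← sq, ← sq, div_pow, one_pow, Real.sq_sqrt ha.le, Real.sq_sqrt hc.le]
  field_simp

/-- Orthonormality of the family `(φ^s_m)` in `L²(ℂ, ω_s dλ)`. -/
theorem statement1 (s : ℝ) (hs0 : 0 < s) (hs1 : s < 1) (m n : ℕ) :
    ∫ z : ℂ, phiS s m z * (starRingEnd ℂ) (phiS s n z) * (omegaS s z : ℂ)
      = if m = n then 1 else 0 := by
  have hν : 0 < (1 - s ^ 2) / (2 * s) := div_pos (by nlinarith) (by linarith)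
  simp_rw [phiS_mul_conj_phiS_mul_omegaS]
  rw [integral_const_mul, integral_pow_mul_conj_pow_mul_cexp_neg_mul_norm_sq hν]
  split_ifs with hmn
  · subst hmn
    have hπ : 0 < π * m.factorial := by positivity
    rw [← ofReal_mul, one_div_sqrt_mul_sqrt_mul_self_mul_div hπ (pow_pos hν _), ofReal_one]
  · exact mul_zero _
end

section
/- The kernel K^s reproduces the space X_s(ℂ): for every function f : ℂ → ℂ that is holomorphic on all of ℂ and satisfies ∫_ℂ |f(z)|² ω_s(z) dλ(z) < ∞, and every z ∈ ℂ, one has f(z) = ∫_ℂ K^s(z,w) f(w) ω_s(w) dλ(w), where K^s(z,w) = ((1 − s²)/(2πs)) · exp(−α(z² + conj(w)²) + ν z conj(w)). -/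
/-!
Multiplying `f` by `exp(α w²)` gives an entire function `g` that is square integrable against
the Gaussian `exp(-ν|w|²)`, and turns the claim into the reproducing property of the Fock space
with that weight. Translating `w = z + u` reduces this to `∫ h(u) exp(-ν|u|²) du = (π/ν) h(0)`
for entire `h`, which follows by averaging the integral over the rotations `u ↦ e^{iφ} u`
(Fubini) and using the mean value property of `h` on circles. The Fock integrand is integrable
by Cauchy–Schwarz, the kernel `w ↦ exp(ν z conj w - ν|w|²/2)` being square integrable.
-/

open MeasureTheory Complex

/-- Reproducing kernel `K^s(z,w) = ((1-s²)/(2πs)) exp(-α(z² + conj w²) + ν z conj w)`. -/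
noncomputable def Kker (s : ℝ) (z w : ℂ) : ℂ :=
  (((1 - s ^ 2) / (2 * Real.pi * s) : ℝ) : ℂ) *
    Complex.exp (-(((1 + s ^ 2) / (4 * s) : ℝ) : ℂ) * (z ^ 2 + (starRingEnd ℂ w) ^ 2)
      + (((1 - s ^ 2) / (2 * s) : ℝ) : ℂ) * z * starRingEnd ℂ w)

open Real ComplexConjugate

theorem exp_mul_I_mul_eq_circleMap (u : ℂ) (φ : ℝ) :
    cexp (φ * I) * u = circleMap 0 ‖u‖ (φ + u.arg) := by
  conv_lhs => rw [← norm_mul_exp_arg_mul_I u]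
  rw [circleMap, zero_add, ofReal_add, add_mul, Complex.exp_add]
  ring

theorem Differentiable.intervalIntegral_comp_exp_mul_I_mul {E : Type*} [NormedAddCommGroup E]
    [NormedSpace ℂ E] [CompleteSpace E] {h : ℂ → E} (hh : Differentiable ℂ h) (u : ℂ) :
    ∫ φ in 0..2 * π, h (cexp (φ * I) * u) = (2 * π) • h 0 := by
  have hmean := hh.diffContOnCl.circleAverage (c := 0) (R := ‖u‖)
  rw [circleAverage_eq_integral_add u.arg] at hmean
  simp only [← exp_mul_I_mul_eq_circleMap] at hmean
  rw [← hmean, smul_inv_smul₀ (by positivity)]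

section Rotation

variable {E : Type*} [NormedAddCommGroup E]

theorem integral_comp_exp_mul_I_mul [NormedSpace ℝ E] (g : ℂ → E) (φ : ℝ) :
    ∫ u, g (cexp (φ * I) * u) = ∫ u, g u := by
  simpa [rotation_apply, Circle.coe_exp] using
    (rotation (Circle.exp φ)).measurePreserving.integral_comp
      (rotation _).toHomeomorph.measurableEmbedding g

theorem integrable_comp_exp_mul_I_mul_iff {g : ℂ → E} (φ : ℝ) :
    Integrable (fun u => g (cexp (φ * I) * u)) ↔ Integrable g := by
  simpa [Function.comp_def, rotation_apply, Circle.coe_exp] using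
    (rotation (Circle.exp φ)).measurePreserving.integrable_comp_emb
      (rotation _).toHomeomorph.measurableEmbedding (g := g)

end Rotation

theorem Differentiable.integral_mul_radial {h : ℂ → ℂ} (hh : Differentiable ℂ h) {ρ : ℝ → ℂ}
    (hρ : Measurable ρ) (hint : Integrable fun u : ℂ => h u * ρ ‖u‖) :
    ∫ u, h u * ρ ‖u‖ = h 0 * ∫ u : ℂ, ρ ‖u‖ := by
  set F : ℂ → ℂ := fun u => h u * ρ ‖u‖
  let μ := volume.restrict (Set.Ioc 0 (2 * π))
  have hF : Measurable F := hh.continuous.measurable.mul (hρ.comp measurable_norm)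
  have hrot : Integrable (Function.uncurry fun (φ : ℝ) (u : ℂ) => F (cexp (φ * I) * u))
      (μ.prod volume) := by
    refine (integrable_prod_iff (hF.comp (by fun_prop)).aestronglyMeasurable).2
      ⟨.of_forall fun φ => (integrable_comp_exp_mul_I_mul_iff φ).2 hint, ?_⟩
    simp only [Function.comp_apply, integral_comp_exp_mul_I_mul (fun u => ‖F u‖)]
    exact integrable_const _
  have hswap := integral_integral_swap (f := fun (φ : ℝ) (u : ℂ) => F (cexp (φ * I) * u)) hrot
  simp only [integral_comp_exp_mul_I_mul F] at hswap
  have hinner (u : ℂ) : ∫ φ, F (cexp (φ * I) * u) ∂μ = (2 * π) • (h 0 * ρ ‖u‖) := by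
    simp only [F, norm_mul, norm_exp_ofReal_mul_I, one_mul]
    rw [integral_mul_const, ← intervalIntegral.integral_of_le (by positivity),
      hh.intervalIntegral_comp_exp_mul_I_mul, smul_mul_assoc]
  simp only [hinner, integral_smul, integral_const_mul, integral_const, μ,
    measureReal_restrict_apply_univ, Real.volume_real_Ioc_of_le (by positivity : (0:ℝ) ≤ 2 * π),
    sub_zero] at hswap
  exact smul_right_injective _ (by positivity) hswap

theorem integral_ofReal_rexp_neg_mul_sq_norm {ν : ℝ} (hν : 0 < ν) :
    ∫ u : ℂ, (rexp (-ν * ‖u‖ ^ 2) : ℂ) = π / ν := by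
  rw [integral_complex_ofReal, GaussianFourier.integral_rexp_neg_mul_sq_norm hν,
    finrank_real_complex]
  norm_num

theorem ofReal_rexp_neg_mul_sq_norm (ν : ℝ) (w : ℂ) :
    (rexp (-ν * ‖w‖ ^ 2) : ℂ) = cexp (-ν * (w * conj w)) := by
  rw [ofReal_exp, mul_conj']
  push_cast
  rfl

theorem norm_mul_rexp_half_sq (a : ℂ) (x : ℝ) : ‖a * rexp (x / 2)‖ ^ 2 = ‖a‖ ^ 2 * rexp x := by
  rw [norm_mul, mul_pow, norm_real, Real.norm_of_nonneg (Real.exp_pos _).le, ← Real.exp_nat_mul]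
  ring_nf

theorem integrable_mul_cexp_mul_conj_mul_rexp {g : ℂ → ℂ} (hg : AEStronglyMeasurable g)
    {ν : ℝ} (hν : 0 < ν) (hL2 : Integrable fun w => ‖g w‖ ^ 2 * rexp (-ν * ‖w‖ ^ 2)) (z : ℂ) :
    Integrable fun w => g w * cexp (ν * z * conj w) * rexp (-ν * ‖w‖ ^ 2) := by
  have hg2 : MemLp (fun w => g w * rexp (-ν * ‖w‖ ^ 2 / 2)) 2 := by
    refine (memLp_two_iff_integrable_sq_norm (by fun_prop)).2 (hL2.congr (.of_forall fun w => ?_))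
    simp only [norm_mul_rexp_half_sq]
  have hk2 : MemLp (fun w => cexp (ν * z * conj w) * rexp (-ν * ‖w‖ ^ 2 / 2)) 2 := by
    refine (memLp_two_iff_integrable_sq_norm (by fun_prop)).2 ?_
    refine (GaussianFourier.integrable_cexp_neg_mul_sq_norm_add (b := ν) (by simpa using hν)
      (2 * ν) z).norm.congr (.of_forall fun w => ?_)
    simp only [norm_mul_rexp_half_sq, norm_exp, ← Real.exp_nat_mul, ← Real.exp_add]
    congr 1
    simp only [Complex.inner, ← ofReal_pow, add_re, mul_re, mul_im, ofReal_re, ofReal_im,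
      conj_re, conj_im, neg_re, neg_im, re_ofNat, im_ofNat]
    ring
  refine (hg2.integrable_mul hk2).congr (.of_forall fun w => ?_)
  have hhalf := Real.exp_add (-ν * ‖w‖ ^ 2 / 2) (-ν * ‖w‖ ^ 2 / 2)
  rw [add_halves] at hhalf
  simp only [Pi.mul_apply, hhalf, ofReal_mul]
  ring

theorem Differentiable.integral_mul_rexp_neg_mul_sq_norm {h : ℂ → ℂ} (hh : Differentiable ℂ h)
    {ν : ℝ} (hν : 0 < ν) (hint : Integrable fun u => h u * rexp (-ν * ‖u‖ ^ 2)) :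
    ∫ u, h u * rexp (-ν * ‖u‖ ^ 2) = π / ν * h 0 := by
  rw [hh.integral_mul_radial (ρ := fun r => (rexp (-ν * r ^ 2) : ℂ)) (by fun_prop) hint,
    integral_ofReal_rexp_neg_mul_sq_norm hν, mul_comm]

theorem Differentiable.integral_mul_cexp_mul_conj_mul_rexp {g : ℂ → ℂ} (hg : Differentiable ℂ g)
    {ν : ℝ} (hν : 0 < ν) (hL2 : Integrable fun w => ‖g w‖ ^ 2 * rexp (-ν * ‖w‖ ^ 2)) (z : ℂ) :
    ∫ w, g w * cexp (ν * z * conj w) * rexp (-ν * ‖w‖ ^ 2) = π / ν * g z := by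
  set G : ℂ → ℂ := fun w => g w * cexp (ν * z * conj w) * rexp (-ν * ‖w‖ ^ 2)
  set h : ℂ → ℂ := fun u => g (z + u) * cexp (-ν * conj z * u)
  have hGh (u : ℂ) : G (z + u) = h u * rexp (-ν * ‖u‖ ^ 2) := by
    simp only [G, h, ofReal_rexp_neg_mul_sq_norm, mul_assoc, ← Complex.exp_add, map_add]
    ring_nf
  have hint : Integrable fun u => h u * rexp (-ν * ‖u‖ ^ 2) := by
    exact ((integrable_mul_cexp_mul_conj_mul_rexp hg.continuous.aestronglyMeasurable hν hL2
      z).comp_add_left z).congr (.of_forall hGh)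
  have hh : Differentiable ℂ h := by fun_prop
  calc ∫ w, G w = ∫ u, G (z + u) := (integral_add_left_eq_self G z).symm
    _ = ∫ u, h u * rexp (-ν * ‖u‖ ^ 2) := by simp only [hGh]
    _ = π / ν * g z := by rw [hh.integral_mul_rexp_neg_mul_sq_norm hν hint]; simp [h]

theorem ofReal_rexp_re_add_conj_sq (α ν : ℝ) (w : ℂ) :
    (rexp (α * (w ^ 2 + conj w ^ 2).re - ν * ‖w‖ ^ 2) : ℂ)
      = cexp (α * (w ^ 2 + conj w ^ 2)) * rexp (-ν * ‖w‖ ^ 2) := by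
  have hreal : (((w ^ 2 + conj w ^ 2).re : ℝ) : ℂ) = w ^ 2 + conj w ^ 2 :=
    conj_eq_iff_re.1 (by simp [add_comm])
  rw [ofReal_exp, ofReal_exp, ← Complex.exp_add]
  push_cast
  rw [hreal]
  ring_nf

theorem Differentiable.eq_integral_cexp_mul_rexp {f : ℂ → ℂ} (hf : Differentiable ℂ f) {α ν : ℝ}
    (hν : 0 < ν)
    (hL2 : Integrable fun w => ‖f w‖ ^ 2 * rexp (α * (w ^ 2 + conj w ^ 2).re - ν * ‖w‖ ^ 2))
    (z : ℂ) :
    f z = ∫ w, (ν / π : ℂ) * cexp (-α * (z ^ 2 + conj w ^ 2) + ν * z * conj w) * f w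
      * rexp (α * (w ^ 2 + conj w ^ 2).re - ν * ‖w‖ ^ 2) := by
  set g : ℂ → ℂ := fun w => f w * cexp (α * w ^ 2)
  have hg : Differentiable ℂ g := by fun_prop
  have hgL2 : Integrable fun w => ‖g w‖ ^ 2 * rexp (-ν * ‖w‖ ^ 2) := by
    refine hL2.congr (.of_forall fun w => ?_)
    simp only [g, norm_mul, mul_pow, norm_exp, ← Real.exp_nat_mul, re_ofReal_mul, add_re,
      ← map_pow, conj_re, mul_assoc, ← Real.exp_add]
    ring_nf
  have hpt (w : ℂ) : (ν / π : ℂ) * cexp (-α * (z ^ 2 + conj w ^ 2) + ν * z * conj w) * f w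
      * rexp (α * (w ^ 2 + conj w ^ 2).re - ν * ‖w‖ ^ 2)
      = (ν / π : ℂ) * cexp (-α * z ^ 2)
        * (g w * cexp (ν * z * conj w) * rexp (-ν * ‖w‖ ^ 2)) := by
    rw [ofReal_rexp_re_add_conj_sq]
    simp only [g, mul_add, neg_mul, Complex.exp_add, Complex.exp_neg]
    field_simp
  simp only [hpt, integral_const_mul, hg.integral_mul_cexp_mul_conj_mul_rexp hν hgL2, g]
  have hν' : (ν : ℂ) ≠ 0 := ofReal_ne_zero.2 hν.ne'
  have hπ : (π : ℂ) ≠ 0 := ofReal_ne_zero.2 pi_ne_zero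
  rw [neg_mul, Complex.exp_neg]
  field_simp

/-- The kernel `K^s` reproduces entire functions square-integrable against `ω_s dλ`. -/
theorem statement4 (s : ℝ) (hs0 : 0 < s) (hs1 : s < 1) (f : ℂ → ℂ)
    (hf : Differentiable ℂ f)
    (hL2 : Integrable (fun z : ℂ => ‖f z‖ ^ 2 * omegaS s z)) (z : ℂ) :
    f z = ∫ w : ℂ, Kker s z w * f w * (omegaS s w : ℂ) := by
  have hν : 0 < (1 - s ^ 2) / (2 * s) := div_pos (by nlinarith) (by positivity)
  refine (hf.eq_integral_cexp_mul_rexp (α := (1 + s ^ 2) / (4 * s)) hν hL2 z).trans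
    (integral_congr_ae (.of_forall fun w => ?_))
  simp only [Kker, omegaS]
  congr 3
  push_cast
  ring
end
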